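/- arXiv:1102.3294 — 3 statements merged into one kernel-verified Lean document; each statement's English description precedes it below -/
import Mathlib

section
/- For jointly distributed random variables X^n = (X_0,...,X_n) and Y^n = (Y_0,...,Y_n) on finite alphabets, the mutual information decomposes as I(X^n; Y^n) = I(X^n → Y^n) + I(X^n ← Y^n), where I(X^n → Y^n) = Σ_{i=0}^n I(X^i; Y_i | Y^{i-1}) and I(X^n ← Y^n) = Σ_{i=0}^n I(Y^{i-1}; X_i | X^{i-1}). -/
open Finset
open scoped Classical

/-- Probability of an event under a pmf `p` on a finite sample space. -/
noncomputable def pr {Ω : Type} [Fintype Ω] (p : Ω → ℝ) (E : Ω → Prop) : ℝ :=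
  ∑ ω, if E ω then p ω else 0

/-- Conditional mutual information `I(f; g | h)` of random variables on a finite
sample space, via `I(A;B|C) = E[log (p(a,b,c) p(c) / (p(a,c) p(b,c)))]`. -/
noncomputable def condMI {Ω A B C : Type} [Fintype Ω] (p : Ω → ℝ)
    (f : Ω → A) (g : Ω → B) (h : Ω → C) : ℝ :=
  ∑ ω, p ω * Real.log
    ((pr p (fun ω' => f ω' = f ω ∧ g ω' = g ω ∧ h ω' = h ω) *
      pr p (fun ω' => h ω' = h ω)) /
     (pr p (fun ω' => f ω' = f ω ∧ h ω' = h ω) *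
      pr p (fun ω' => g ω' = g ω ∧ h ω' = h ω)))

/-- Mutual information `I(f; g)`. -/
noncomputable def mutInfoRV {Ω A B : Type} [Fintype Ω] (p : Ω → ℝ)
    (f : Ω → A) (g : Ω → B) : ℝ :=
  condMI p f g (fun _ => ())

/-- The prefix `Z^i = (Z_0, …, Z_i)` of a sequence-valued random variable. -/
def pref {Ω α : Type} {n : ℕ} (Z : Ω → Fin (n + 1) → α) (i : Fin (n + 1)) :
    Ω → Fin (i.1 + 1) → α :=
  fun ω j => Z ω (Fin.castLE i.isLt j)

/-- The strict prefix `Z^{i-1} = (Z_0, …, Z_{i-1})`. -/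
def spref {Ω α : Type} {n : ℕ} (Z : Ω → Fin (n + 1) → α) (i : Fin (n + 1)) :
    Ω → Fin i.1 → α :=
  fun ω j => Z ω (Fin.castLE i.isLt.le j)

/-- Directed information `I(X^n → Y^n) = ∑_{i=0}^n I(X^i; Y_i | Y^{i-1})`. -/
noncomputable def dirInfo {Ω 𝒳 𝒴 : Type} [Fintype Ω] {n : ℕ} (p : Ω → ℝ)
    (X : Ω → Fin (n + 1) → 𝒳) (Y : Ω → Fin (n + 1) → 𝒴) : ℝ :=
  ∑ i : Fin (n + 1), condMI p (pref X i) (fun ω => Y ω i) (spref Y i)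

/-- Reverse directed information `I(X^n ← Y^n) = ∑_{i=0}^n I(Y^{i-1}; X_i | X^{i-1})`. -/
noncomputable def revDirInfo {Ω 𝒳 𝒴 : Type} [Fintype Ω] {n : ℕ} (p : Ω → ℝ)
    (X : Ω → Fin (n + 1) → 𝒳) (Y : Ω → Fin (n + 1) → 𝒴) : ℝ :=
  ∑ i : Fin (n + 1), condMI p (spref Y i) (fun ω => X ω i) (spref X i)

/-- Conditional independence of `f` and `g` given `h` (a Markov chain `f ↔ h ↔ g`),
stated via factorization of joint probability mass functions. -/
def CondIndep {Ω A B C : Type} [Fintype Ω] (p : Ω → ℝ)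
    (f : Ω → A) (g : Ω → B) (h : Ω → C) : Prop :=
  ∀ (a : A) (b : B) (c : C),
    pr p (fun ω => f ω = a ∧ g ω = b ∧ h ω = c) * pr p (fun ω => h ω = c) =
    pr p (fun ω => f ω = a ∧ h ω = c) * pr p (fun ω => g ω = b ∧ h ω = c)

/-!
Fix an outcome `ω` and write `G k l` for the log-probability that the outcome agrees with `ω`
on `X_0, …, X_{k-1}` and on `Y_0, …, Y_{l-1}`. Every conditional mutual information in the
statement is the `p`-average of a signed sum of four such terms: the logarithm of the ratio splits
because at an outcome of positive mass all four probabilities are positive. With `D k = G k k - G k 0 - G 0 k`,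
the `i`-th directed and reverse directed terms add up to `D (i + 1) - D i`, so the sum over `i`
telescopes to `D (n + 1) - D 0`, which is the integrand of `I(X^n; Y^n)`.
-/

section Probability

variable {Ω : Type} [Fintype Ω] {p : Ω → ℝ}

lemma pr_pos (hp : ∀ ω, 0 ≤ p ω) {E : Ω → Prop} {ω : Ω} (hE : E ω) (hpω : 0 < p ω) :
    0 < pr p E :=
  calc 0 < p ω := hpω
    _ = if E ω then p ω else 0 := (if_pos hE).symm
    _ ≤ pr p E := single_le_sum (f := fun ω' => if E ω' then p ω' else 0)
        (fun ω' _ => by split_ifs <;> simp [hp ω']) (mem_univ ω)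

lemma condMI_eq_sum_log {A B C : Type} (hp : ∀ ω, 0 ≤ p ω)
    (f : Ω → A) (g : Ω → B) (h : Ω → C) :
    condMI p f g h = ∑ ω, p ω *
      (Real.log (pr p fun ω' => f ω' = f ω ∧ g ω' = g ω ∧ h ω' = h ω) +
        Real.log (pr p fun ω' => h ω' = h ω) -
        Real.log (pr p fun ω' => f ω' = f ω ∧ h ω' = h ω) -
        Real.log (pr p fun ω' => g ω' = g ω ∧ h ω' = h ω)) := by
  refine sum_congr rfl fun ω _ => ?_
  rcases (hp ω).eq_or_lt with hpω | hpω
  · simp only [← hpω, zero_mul]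
  have hfgh := pr_pos (p := p) hp (E := fun ω' => f ω' = f ω ∧ g ω' = g ω ∧ h ω' = h ω)
    ⟨rfl, rfl, rfl⟩ hpω
  have hh := pr_pos (p := p) hp (E := fun ω' => h ω' = h ω) rfl hpω
  have hfh := pr_pos (p := p) hp (E := fun ω' => f ω' = f ω ∧ h ω' = h ω) ⟨rfl, rfl⟩ hpω
  have hgh := pr_pos (p := p) hp (E := fun ω' => g ω' = g ω ∧ h ω' = h ω) ⟨rfl, rfl⟩ hpω
  rw [Real.log_div (mul_pos hfgh hh).ne' (mul_pos hfh hgh).ne', Real.log_mul hfgh.ne' hh.ne',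
    Real.log_mul hfh.ne' hgh.ne']
  ring

end Probability

section Prefix

variable {Ω α : Type} {n : ℕ} (Z : Ω → Fin (n + 1) → α)

def AgreeUpTo (k : ℕ) (ω' ω : Ω) : Prop :=
  ∀ j : Fin (n + 1), (j : ℕ) < k → Z ω' j = Z ω j

lemma agreeUpTo_zero (ω' ω : Ω) : AgreeUpTo Z 0 ω' ω :=
  fun _ hj => absurd hj (Nat.not_lt_zero _)

lemma agreeUpTo_succ_iff (i : Fin (n + 1)) (ω' ω : Ω) :
    AgreeUpTo Z (i + 1) ω' ω ↔ Z ω' i = Z ω i ∧ AgreeUpTo Z i ω' ω := by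
  refine ⟨fun h => ⟨h i i.1.lt_succ_self, fun j hj => h j (Nat.lt_succ_of_lt hj)⟩, ?_⟩
  rintro ⟨hi, hlt⟩ j hj
  rcases Nat.lt_succ_iff_lt_or_eq.mp hj with hj | hj
  · exact hlt j hj
  · rwa [Fin.ext hj]

lemma eq_iff_agreeUpTo (ω' ω : Ω) : Z ω' = Z ω ↔ AgreeUpTo Z (n + 1) ω' ω :=
  ⟨fun h j _ => congrFun h j, fun h => funext fun j => h j j.isLt⟩

lemma pref_eq_iff_agreeUpTo (i : Fin (n + 1)) (ω' ω : Ω) :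
    pref Z i ω' = pref Z i ω ↔ AgreeUpTo Z (i + 1) ω' ω :=
  ⟨fun h j hj => congrFun h ⟨j, hj⟩, fun h => funext fun j => h _ j.isLt⟩

lemma spref_eq_iff_agreeUpTo (i : Fin (n + 1)) (ω' ω : Ω) :
    spref Z i ω' = spref Z i ω ↔ AgreeUpTo Z i ω' ω :=
  ⟨fun h j hj => congrFun h ⟨j, hj⟩, fun h => funext fun j => h _ j.isLt⟩

end Prefix

section LogPrAgree

variable {Ω 𝒳 𝒴 : Type} [Fintype Ω] {n : ℕ} {p : Ω → ℝ}
  (X : Ω → Fin (n + 1) → 𝒳) (Y : Ω → Fin (n + 1) → 𝒴)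

noncomputable def logPrAgree (p : Ω → ℝ) (ω : Ω) (k l : ℕ) : ℝ :=
  Real.log (pr p fun ω' => AgreeUpTo X k ω' ω ∧ AgreeUpTo Y l ω' ω)

lemma mutInfoRV_eq_sum_logPrAgree (hp : ∀ ω, 0 ≤ p ω) :
    mutInfoRV p X Y = ∑ ω, p ω *
      (logPrAgree X Y p ω (n + 1) (n + 1) + logPrAgree X Y p ω 0 0 -
        logPrAgree X Y p ω (n + 1) 0 - logPrAgree X Y p ω 0 (n + 1)) := by
  rw [mutInfoRV, condMI_eq_sum_log hp]
  refine sum_congr rfl fun ω _ => ?_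
  simp only [logPrAgree, eq_iff_agreeUpTo, agreeUpTo_zero, and_true, true_and]

lemma condMI_pref_eq_sum_logPrAgree (hp : ∀ ω, 0 ≤ p ω) (i : Fin (n + 1)) :
    condMI p (pref X i) (fun ω => Y ω i) (spref Y i) = ∑ ω, p ω *
      (logPrAgree X Y p ω (i + 1) (i + 1) + logPrAgree X Y p ω 0 i -
        logPrAgree X Y p ω (i + 1) i - logPrAgree X Y p ω 0 (i + 1)) := by
  rw [condMI_eq_sum_log hp]
  refine sum_congr rfl fun ω _ => ?_
  simp only [logPrAgree, pref_eq_iff_agreeUpTo, spref_eq_iff_agreeUpTo, agreeUpTo_succ_iff,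
    agreeUpTo_zero, true_and]

lemma condMI_spref_eq_sum_logPrAgree (hp : ∀ ω, 0 ≤ p ω) (i : Fin (n + 1)) :
    condMI p (spref Y i) (fun ω => X ω i) (spref X i) = ∑ ω, p ω *
      (logPrAgree X Y p ω (i + 1) i + logPrAgree X Y p ω i 0 -
        logPrAgree X Y p ω i i - logPrAgree X Y p ω (i + 1) 0) := by
  rw [condMI_eq_sum_log hp]
  refine sum_congr rfl fun ω _ => ?_
  simp only [logPrAgree, spref_eq_iff_agreeUpTo, agreeUpTo_succ_iff, agreeUpTo_zero, true_and,
    and_comm, and_left_comm]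

end LogPrAgree

lemma sum_fin_dir_add_rev_telescope (G : ℕ → ℕ → ℝ) (n : ℕ) :
    ∑ i : Fin (n + 1), ((G (i + 1) (i + 1) + G 0 i - G (i + 1) i - G 0 (i + 1)) +
      (G (i + 1) i + G i 0 - G i i - G (i + 1) 0)) =
    G (n + 1) (n + 1) + G 0 0 - G (n + 1) 0 - G 0 (n + 1) := by
  set D : ℕ → ℝ := fun k => G k k - G k 0 - G 0 k
  calc _ = ∑ i ∈ range (n + 1), (D (i + 1) - D i) := by
        rw [← Fin.sum_univ_eq_sum_range (fun i => D (i + 1) - D i)]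
        exact sum_congr rfl fun i _ => by ring
    _ = D (n + 1) - D 0 := sum_range_sub D _
    _ = _ := by ring

theorem mutInfo_eq_dirInfo_add_revDirInfo_general
    {Ω 𝒳 𝒴 : Type} [Fintype Ω] {n : ℕ}
    (p : Ω → ℝ) (hp : ∀ ω, 0 ≤ p ω)
    (X : Ω → Fin (n + 1) → 𝒳) (Y : Ω → Fin (n + 1) → 𝒴) :
    mutInfoRV p X Y = dirInfo p X Y + revDirInfo p X Y := by
  rw [mutInfoRV_eq_sum_logPrAgree X Y hp, dirInfo, revDirInfo]
  simp only [condMI_pref_eq_sum_logPrAgree X Y hp, condMI_spref_eq_sum_logPrAgree X Y hp,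
    ← sum_add_distrib, ← mul_add]
  rw [sum_comm]
  refine sum_congr rfl fun ω _ => ?_
  rw [← mul_sum, sum_fin_dir_add_rev_telescope]

/-- `I(X^n; Y^n) = I(X^n → Y^n) + I(X^n ← Y^n)`. -/
theorem mutInfo_eq_dirInfo_add_revDirInfo
    {Ω 𝒳 𝒴 : Type} [Fintype Ω] [Fintype 𝒳] [Fintype 𝒴] {n : ℕ}
    (p : Ω → ℝ) (hp : ∀ ω, 0 ≤ p ω) (hsum : ∑ ω, p ω = 1)
    (X : Ω → Fin (n + 1) → 𝒳) (Y : Ω → Fin (n + 1) → 𝒴) :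
    mutInfoRV p X Y = dirInfo p X Y + revDirInfo p X Y :=
  mutInfo_eq_dirInfo_add_revDirInfo_general p hp X Y
end

section
/- For jointly distributed finite-alphabet random variables X^n, Y^n, the conditional distribution factorizes causally, i.e., P(Y^n = y^n | X^n = x^n) = Π_{i=0}^n P(Y_i = y_i | Y^{i-1} = y^{i-1}, X^i = x^i) for all x^n with positive probability, if and only if for each i = 0,...,n-1 the Markov chain Y_i ↔ (X^i, Y^{i-1}) ↔ (X_{i+1},...,X_n) holds. -/
open Finset
open scoped Classical

/-! Write `D_k(x, y) = P(X^n = x, Y^{k-1} = y^{k-1})` (`prefixProb p x k y`) and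
`F_i(x, y) = P(y_i | y^{i-1}, x^i)` (`causalFactor p x y i`). The Markov chain at `i` is
exactly `D_{i+1} = D_i F_i`, and at `i = n` it holds trivially since there is no future input.
Multiplying these identities gives `D_{n+1} = D_0 ∏ F_i`, the causal factorization.
Conversely, `k ↦ D_k` and `k ↦ D_0 ∏_{i<k} F_i` are both consistent families of marginals
(summing the `(k+1)`-st over `y_k` gives the `k`-th), so agreeing at `k = n + 1` they agree at
every `k`, and comparing consecutive ones gives `D_{i+1} = D_i F_i`. -/

theorem pr_congr {Ω : Type} [Fintype Ω] (p : Ω → ℝ) {E F : Ω → Prop}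
    (h : ∀ ω, E ω ↔ F ω) : pr p E = pr p F := by
  simp only [pr, h]

theorem pr_pos_s3 {Ω : Type} [Fintype Ω] {p : Ω → ℝ} (hpos : ∀ ω, 0 < p ω)
    {E : Ω → Prop} {ω₀ : Ω} (h : E ω₀) : 0 < pr p E :=
  sum_pos' (fun ω _ => by split_ifs <;> simp [(hpos ω).le])
    ⟨ω₀, mem_univ _, by simpa [h] using hpos ω₀⟩

theorem sum_pr_fiberwise {Ω α : Type} [Fintype Ω] [Fintype α] (p : Ω → ℝ)
    (f : Ω → α) (E : Ω → Prop) :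
    ∑ a, pr p (fun ω => f ω = a ∧ E ω) = pr p E := by
  unfold pr
  rw [sum_comm]
  refine sum_congr rfl fun ω _ => ?_
  by_cases hE : E ω <;> simp [hE]

theorem condIndep_of_subsingleton {Ω A B C : Type} [Fintype Ω] [Subsingleton B]
    (p : Ω → ℝ) (f : Ω → A) (g : Ω → B) (h : Ω → C) : CondIndep p f g h := by
  intro a b c
  simp only [Subsingleton.elim _ b, true_and]

theorem condIndep_iff_of_surjective {Ω A B C : Type} [Fintype Ω] (p : Ω → ℝ)
    (f : Ω → A) (g : Ω → B) (h : Ω → C) (hs : Function.Surjective fun ω => (f ω, g ω, h ω)) :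
    CondIndep p f g h ↔ ∀ ω₀,
      pr p (fun ω => f ω = f ω₀ ∧ g ω = g ω₀ ∧ h ω = h ω₀) * pr p (fun ω => h ω = h ω₀) =
      pr p (fun ω => f ω = f ω₀ ∧ h ω = h ω₀) * pr p (fun ω => g ω = g ω₀ ∧ h ω = h ω₀) := by
  refine ⟨fun H ω₀ => H _ _ _, fun H a b c => ?_⟩
  obtain ⟨ω₀, hω₀⟩ := hs (a, b, c)
  simp only [Prod.mk.injEq] at hω₀
  obtain ⟨rfl, rfl, rfl⟩ := hω₀
  exact H ω₀

section Marginal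

variable {α : Type} [Fintype α] {m : ℕ}

def IsMarginalFamily {β : Type} [AddCommMonoid β] (f : ℕ → (Fin m → α) → β) : Prop :=
  ∀ (i : Fin m) (y : Fin m → α), ∑ v, f (i + 1) (Function.update y i v) = f i y

theorem IsMarginalFamily.eq_of_eq_top {β : Type} [AddCommMonoid β] {f g : ℕ → (Fin m → α) → β}
    (hf : IsMarginalFamily f) (hg : IsMarginalFamily g) (htop : f m = g m) {k : ℕ}
    (hk : k ≤ m) : f k = g k := by
  induction hk using Nat.decreasingInduction with
  | self => exact htop
  | of_succ k hk ih =>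
    funext y
    rw [← hf ⟨k, hk⟩, ← hg ⟨k, hk⟩]
    simp only [ih]

theorem IsMarginalFamily.const_mul {R : Type} [NonUnitalNonAssocSemiring R]
    {f : ℕ → (Fin m → α) → R} (hf : IsMarginalFamily f) (c : R) :
    IsMarginalFamily fun k y => c * f k y := by
  intro i y
  rw [← mul_sum, hf]

end Marginal

theorem Fin.forall_val_lt_succ_iff {m : ℕ} {P : Fin m → Prop} (i : Fin m) :
    (∀ j : Fin m, (j : ℕ) < i + 1 → P j) ↔ P i ∧ ∀ j : Fin m, (j : ℕ) < i → P j := by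
  refine ⟨fun h => ⟨h i (Nat.lt_succ_self _), fun j hj => h j (by omega)⟩, ?_⟩
  rintro ⟨hi, h⟩ j hj
  rcases (Nat.lt_succ_iff.1 hj).lt_or_eq with hj | hj
  · exact h j hj
  · exact Fin.ext hj ▸ hi

theorem pref_eq_pref_iff {Ω α : Type} {n : ℕ} (Z : Ω → Fin (n + 1) → α) (i : Fin (n + 1))
    (ω ω' : Ω) : pref Z i ω = pref Z i ω' ↔ ∀ j ≤ i, Z ω j = Z ω' j := by
  simp only [pref, funext_iff]
  constructor
  · intro h j hj
    simpa using h ⟨j, Nat.lt_succ_of_le hj⟩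
  · intro h j
    exact h _ (Nat.lt_succ_iff.1 j.isLt)

theorem spref_eq_spref_iff {Ω α : Type} {n : ℕ} (Z : Ω → Fin (n + 1) → α) (i : Fin (n + 1))
    (ω ω' : Ω) : spref Z i ω = spref Z i ω' ↔ ∀ j < i, Z ω j = Z ω' j := by
  simp only [spref, funext_iff]
  constructor
  · intro h j hj
    simpa using h ⟨j, hj⟩
  · intro h j
    exact h _ j.isLt

noncomputable section Causal

variable {𝒳 𝒴 : Type} {n : ℕ}

def causalPast (x : Fin (n + 1) → 𝒳) (y : Fin (n + 1) → 𝒴) (i : Fin (n + 1)) :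
    (Fin (n + 1) → 𝒳) × (Fin (n + 1) → 𝒴) → Prop :=
  fun z => (∀ j, j < i → z.2 j = y j) ∧ ∀ j, j ≤ i → z.1 j = x j

theorem causalPast_update (x : Fin (n + 1) → 𝒳) (y : Fin (n + 1) → 𝒴) {i j : Fin (n + 1)}
    (hji : j ≤ i) (v : 𝒴) : causalPast x (Function.update y i v) j = causalPast x y j := by
  funext z
  simp +contextual [causalPast, Function.update_of_ne (Fin.ne_of_lt (lt_of_lt_of_le _ hji))]

variable [Fintype 𝒳] [Fintype 𝒴] {p : (Fin (n + 1) → 𝒳) × (Fin (n + 1) → 𝒴) → ℝ}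

def prefixProb (p : (Fin (n + 1) → 𝒳) × (Fin (n + 1) → 𝒴) → ℝ) (x : Fin (n + 1) → 𝒳)
    (k : ℕ) (y : Fin (n + 1) → 𝒴) : ℝ :=
  pr p fun z => z.1 = x ∧ ∀ j : Fin (n + 1), (j : ℕ) < k → z.2 j = y j

def causalFactor (p : (Fin (n + 1) → 𝒳) × (Fin (n + 1) → 𝒴) → ℝ) (x : Fin (n + 1) → 𝒳)
    (y : Fin (n + 1) → 𝒴) (i : Fin (n + 1)) : ℝ :=
  pr p (fun z => z.2 i = y i ∧ causalPast x y i z) / pr p (causalPast x y i)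

def causalProd (p : (Fin (n + 1) → 𝒳) × (Fin (n + 1) → 𝒴) → ℝ) (x : Fin (n + 1) → 𝒳)
    (k : ℕ) (y : Fin (n + 1) → 𝒴) : ℝ :=
  ∏ i ∈ univ.filter (fun i : Fin (n + 1) => (i : ℕ) < k), causalFactor p x y i

variable (x : Fin (n + 1) → 𝒳) (y : Fin (n + 1) → 𝒴)

theorem prefixProb_zero : prefixProb p x 0 y = pr p fun z => z.1 = x :=
  pr_congr p fun z => by simp

theorem prefixProb_last : prefixProb p x (n + 1) y = pr p fun z => z.1 = x ∧ z.2 = y :=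
  pr_congr p fun z => by simp only [Fin.is_lt, true_implies, funext_iff]

theorem isMarginalFamily_prefixProb : IsMarginalFamily (prefixProb p x) := by
  intro i y
  simp only [prefixProb]
  rw [← sum_pr_fiberwise p (fun z => z.2 i)]
  refine sum_congr rfl fun v _ => pr_congr p fun z => ?_
  have hpast : ∀ j : Fin (n + 1), (j : ℕ) < i → Function.update y i v j = y j :=
    fun j hj => Function.update_of_ne (Fin.ne_of_lt hj) v y
  rw [Fin.forall_val_lt_succ_iff]
  simp +contextual only [Function.update_self, hpast]
  tauto

theorem causalFactor_update {i j : Fin (n + 1)} (hji : j < i) (v : 𝒴) :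
    causalFactor p x (Function.update y i v) j = causalFactor p x y j := by
  rw [causalFactor, causalFactor, causalPast_update x y hji.le, Function.update_of_ne hji.ne]

theorem sum_causalFactor_update (hpos : ∀ z, 0 < p z) (i : Fin (n + 1)) :
    ∑ v, causalFactor p x (Function.update y i v) i = 1 := by
  have hpast : 0 < pr p (causalPast x y i) :=
    pr_pos_s3 hpos (ω₀ := (x, y)) ⟨fun _ _ => rfl, fun _ _ => rfl⟩
  simp only [causalFactor, causalPast_update x y le_rfl, Function.update_self]
  rw [← sum_div, sum_pr_fiberwise, div_self hpast.ne']

theorem causalProd_zero : causalProd p x 0 y = 1 := by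
  simp [causalProd]

theorem causalProd_last : causalProd p x (n + 1) y = ∏ i, causalFactor p x y i := by
  simp only [causalProd, Fin.is_lt, filter_true]

theorem causalProd_succ (i : Fin (n + 1)) :
    causalProd p x (i + 1) y = causalProd p x i y * causalFactor p x y i := by
  have : univ.filter (fun j : Fin (n + 1) => (j : ℕ) < i + 1) =
      insert i (univ.filter fun j : Fin (n + 1) => (j : ℕ) < i) := by
    ext j
    simp [le_iff_eq_or_lt, Fin.ext_iff]
  rw [causalProd, this, prod_insert (by simp), mul_comm]
  rfl

theorem causalProd_update {k : ℕ} {i : Fin (n + 1)} (hki : k ≤ i) (v : 𝒴) :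
    causalProd p x k (Function.update y i v) = causalProd p x k y :=
  prod_congr rfl fun j hj => causalFactor_update x y (by simp at hj; omega) v

theorem isMarginalFamily_causalProd (hpos : ∀ z, 0 < p z) :
    IsMarginalFamily (causalProd p x) := by
  intro i y
  simp only [causalProd_succ, causalProd_update x y le_rfl, ← mul_sum,
    sum_causalFactor_update x y hpos, mul_one]

theorem prefixProb_eq_mul_causalProd_iff (hpos : ∀ z, 0 < p z) :
    (∀ y, prefixProb p x (n + 1) y = pr p (fun z => z.1 = x) * causalProd p x (n + 1) y) ↔
      ∀ (i : Fin (n + 1)) y,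
        prefixProb p x (i + 1) y = prefixProb p x i y * causalFactor p x y i := by
  constructor
  · intro h i y
    have hk := fun k (hk : k ≤ n + 1) => (isMarginalFamily_prefixProb x).eq_of_eq_top
      ((isMarginalFamily_causalProd x hpos).const_mul _) (funext h) hk
    rw [congrFun (hk _ i.isLt) y, congrFun (hk _ i.isLt.le) y, causalProd_succ, mul_assoc]
  · intro h y
    suffices ∀ k ≤ n + 1, prefixProb p x k y = pr p (fun z => z.1 = x) * causalProd p x k y from
      this _ le_rfl
    intro k hk
    induction k with
    | zero => rw [prefixProb_zero, causalProd_zero, mul_one]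
    | succ k ih =>
      calc prefixProb p x (k + 1) y
          = prefixProb p x k y * causalFactor p x y ⟨k, hk⟩ := h ⟨k, hk⟩ y
        _ = _ := by rw [ih (by omega), mul_assoc, ← causalProd_succ x y ⟨k, hk⟩]

end Causal

section Markov

variable {𝒳 𝒴 : Type} {n : ℕ}

def futureInputs (i : Fin (n + 1)) :
    (Fin (n + 1) → 𝒳) × (Fin (n + 1) → 𝒴) → {k : Fin (n + 1) // i < k} → 𝒳 :=
  fun z j => z.1 j.1

def causalHistory (i : Fin (n + 1)) :
    (Fin (n + 1) → 𝒳) × (Fin (n + 1) → 𝒴) → (Fin (i + 1) → 𝒳) × (Fin i → 𝒴) :=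
  fun z => (pref (fun w : (Fin (n + 1) → 𝒳) × (Fin (n + 1) → 𝒴) => w.1) i z,
    spref (fun w : (Fin (n + 1) → 𝒳) × (Fin (n + 1) → 𝒴) => w.2) i z)

variable (i : Fin (n + 1)) (x : Fin (n + 1) → 𝒳) (y : Fin (n + 1) → 𝒴)
  (z : (Fin (n + 1) → 𝒳) × (Fin (n + 1) → 𝒴))

theorem futureInputs_eq_iff :
    futureInputs i z = futureInputs i (x, y) ↔ ∀ j, i < j → z.1 j = x j := by
  simp [futureInputs, funext_iff]

theorem causalHistory_eq_iff :
    causalHistory i z = causalHistory i (x, y) ↔ causalPast x y i z := by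
  rw [causalHistory, causalHistory, Prod.mk.injEq, pref_eq_pref_iff, spref_eq_spref_iff, and_comm]
  rfl

theorem future_and_causalPast_iff :
    ((∀ j, i < j → z.1 j = x j) ∧ causalPast x y i z) ↔
      z.1 = x ∧ ∀ j : Fin (n + 1), (j : ℕ) < i → z.2 j = y j := by
  simp only [causalPast, funext_iff, Fin.val_fin_lt]
  constructor
  · rintro ⟨hfuture, hy, hx⟩
    exact ⟨fun j => (le_or_gt j i).elim (hx j) (hfuture j), hy⟩
  · rintro ⟨hx, hy⟩
    exact ⟨fun j _ => hx j, hy, fun j _ => hx j⟩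

theorem surjective_snd_futureInputs_causalHistory :
    Function.Surjective fun z : (Fin (n + 1) → 𝒳) × (Fin (n + 1) → 𝒴) =>
      (z.2 i, futureInputs i z, causalHistory i z) := by
  rintro ⟨a, b, c, d⟩
  refine ⟨(fun j => if h : j ≤ i then c ⟨j, Nat.lt_succ_of_le h⟩ else b ⟨j, not_le.1 h⟩,
    fun j => if h : j < i then d ⟨j, h⟩ else a), ?_⟩
  simp only [futureInputs, causalHistory, pref, spref, Prod.mk.injEq, funext_iff]
  refine ⟨dif_neg (lt_irrefl i), fun j => ?_, fun j => ?_, fun j => ?_⟩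
  · exact dif_neg (not_le.2 j.2)
  · exact dif_pos (Nat.lt_succ_iff.1 j.isLt)
  · exact dif_pos j.isLt

theorem condIndep_futureInputs_causalHistory_iff [Fintype 𝒳] [Fintype 𝒴]
    {p : (Fin (n + 1) → 𝒳) × (Fin (n + 1) → 𝒴) → ℝ} (hpos : ∀ z, 0 < p z) :
    CondIndep p (fun z => z.2 i) (futureInputs i) (causalHistory i) ↔
      ∀ x y, prefixProb p x (i + 1) y = prefixProb p x i y * causalFactor p x y i := by
  rw [condIndep_iff_of_surjective _ _ _ _ (surjective_snd_futureInputs_causalHistory i),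
    Prod.forall]
  refine forall₂_congr fun x y => ?_
  simp only [futureInputs_eq_iff, causalHistory_eq_iff]
  have hpast : 0 < pr p (causalPast x y i) :=
    pr_pos_s3 hpos (ω₀ := (x, y)) ⟨fun _ _ => rfl, fun _ _ => rfl⟩
  have hnow : (pr p fun z => z.2 i = y i ∧ (∀ j, i < j → z.1 j = x j) ∧ causalPast x y i z) =
      prefixProb p x (i + 1) y :=
    pr_congr p fun z => by
      have := future_and_causalPast_iff i x y z
      rw [Fin.forall_val_lt_succ_iff]
      tauto
  have hbefore : (pr p fun z => (∀ j, i < j → z.1 j = x j) ∧ causalPast x y i z) =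
      prefixProb p x i y :=
    pr_congr p (future_and_causalPast_iff i x y)
  rw [hnow, hbefore, causalFactor, mul_div_assoc', eq_div_iff hpast.ne',
    mul_comm (prefixProb p x i y)]

end Markov

theorem causal_factorization_iff_markov_general
    {𝒳 𝒴 : Type} [Fintype 𝒳] [Fintype 𝒴] {n : ℕ}
    (p : (Fin (n + 1) → 𝒳) × (Fin (n + 1) → 𝒴) → ℝ)
    (hpos : ∀ z, 0 < p z) :
    (∀ (x : Fin (n + 1) → 𝒳) (y : Fin (n + 1) → 𝒴),
        pr p (fun z => z.1 = x ∧ z.2 = y) / pr p (fun z => z.1 = x) =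
        ∏ i : Fin (n + 1),
          pr p (fun z => z.2 i = y i ∧ (∀ j : Fin (n + 1), j < i → z.2 j = y j) ∧
              (∀ j : Fin (n + 1), j ≤ i → z.1 j = x j)) /
          pr p (fun z => (∀ j : Fin (n + 1), j < i → z.2 j = y j) ∧
              (∀ j : Fin (n + 1), j ≤ i → z.1 j = x j)))
    ↔
    (∀ i : Fin n,
      CondIndep p (fun z => z.2 i.castSucc)
        (fun z => fun j : {k : Fin (n + 1) // i.castSucc < k} => z.1 j.1)
        (fun z => (pref (fun w : (Fin (n + 1) → 𝒳) × (Fin (n + 1) → 𝒴) => w.1)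
            i.castSucc z,
          spref (fun w : (Fin (n + 1) → 𝒳) × (Fin (n + 1) → 𝒴) => w.2)
            i.castSucc z))) := by
  have hlast : CondIndep p (fun z => z.2 (Fin.last n)) (futureInputs (Fin.last n))
      (causalHistory (Fin.last n)) :=
    have : IsEmpty {k // Fin.last n < k} := ⟨fun k => (Fin.le_last k.1).not_gt k.2⟩
    condIndep_of_subsingleton p _ _ _
  calc _ ↔ ∀ x y,
        prefixProb p x (n + 1) y = pr p (fun z => z.1 = x) * causalProd p x (n + 1) y := by
        refine forall₂_congr fun x y => ?_
        rw [prefixProb_last, causalProd_last,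
          div_eq_iff (pr_pos_s3 (E := fun z => z.1 = x) hpos (ω₀ := (x, y)) rfl).ne', mul_comm]
        rfl
    _ ↔ ∀ x (i : Fin (n + 1)) y,
        prefixProb p x (i + 1) y = prefixProb p x i y * causalFactor p x y i :=
      forall_congr' fun x => prefixProb_eq_mul_causalProd_iff x hpos
    _ ↔ ∀ i : Fin (n + 1), CondIndep p (fun z => z.2 i) (futureInputs i) (causalHistory i) := by
      rw [forall_comm]
      exact forall_congr' fun i => (condIndep_futureInputs_causalHistory_iff i hpos).symm
    _ ↔ _ := by
      rw [Fin.forall_fin_succ']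
      exact and_iff_left hlast

/-- on the canonical space, the conditional law of `Y^n` given `X^n`
factorizes causally, `P(y^n|x^n) = ∏_i P(y_i | y^{i-1}, x^i)`, iff for each
`i = 0, …, n-1` the Markov chain `Y_i ↔ (X^i, Y^{i-1}) ↔ (X_{i+1}, …, X_n)` holds. -/
theorem causal_factorization_iff_markov
    {𝒳 𝒴 : Type} [Fintype 𝒳] [Fintype 𝒴] {n : ℕ}
    (p : (Fin (n + 1) → 𝒳) × (Fin (n + 1) → 𝒴) → ℝ)
    (hpos : ∀ z, 0 < p z) (hsum : ∑ z, p z = 1) :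
    (∀ (x : Fin (n + 1) → 𝒳) (y : Fin (n + 1) → 𝒴),
        pr p (fun z => z.1 = x ∧ z.2 = y) / pr p (fun z => z.1 = x) =
        ∏ i : Fin (n + 1),
          pr p (fun z => z.2 i = y i ∧ (∀ j : Fin (n + 1), j < i → z.2 j = y j) ∧
              (∀ j : Fin (n + 1), j ≤ i → z.1 j = x j)) /
          pr p (fun z => (∀ j : Fin (n + 1), j < i → z.2 j = y j) ∧
              (∀ j : Fin (n + 1), j ≤ i → z.1 j = x j)))
    ↔
    (∀ i : Fin n,
      CondIndep p (fun z => z.2 i.castSucc)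
        (fun z => fun j : {k : Fin (n + 1) // i.castSucc < k} => z.1 j.1)
        (fun z => (pref (fun w : (Fin (n + 1) → 𝒳) × (Fin (n + 1) → 𝒴) => w.1)
            i.castSucc z,
          spref (fun w : (Fin (n + 1) → 𝒳) × (Fin (n + 1) → 𝒴) => w.2)
            i.castSucc z))) :=
  causal_factorization_iff_markov_general p hpos
end

section
/- With the setup of the tilted kernel q*(y|x) = e^{s d(x,y)} ν*(y)/Z(x) whose output marginal equals ν*, for any other stochastic kernel q from X to Y, I(μ; q) ≥ s·E_{μ⊗q}[d] − Σ_x μ(x) log Z(x). Consequently if E_{μ⊗q}[d] ≤ E_{μ⊗q*}[d] and s ≤ 0, then I(μ;q) ≥ I(μ;q*), so q* achieves the rate distortion function at distortion level D = E_{μ⊗q*}[d]. -/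
open Finset

/-- `μ` is a probability mass function on a finite set. -/
def IsPMF {α : Type} [Fintype α] (μ : α → ℝ) : Prop :=
  (∀ a, 0 ≤ μ a) ∧ ∑ a, μ a = 1

/-- `q` is a stochastic kernel from `𝒳` to `𝒴`: each `q x ·` is a pmf on `𝒴`. -/
def IsKernel {𝒳 𝒴 : Type} [Fintype 𝒴] (q : 𝒳 → 𝒴 → ℝ) : Prop :=
  (∀ x y, 0 ≤ q x y) ∧ ∀ x, ∑ y, q x y = 1

/-- Mutual information `I(μ; q) = ∑_{x,y} μ(x) q(y|x) log(q(y|x)/ν(y))`,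
where `ν(y) = ∑_x μ(x) q(y|x)` is the output marginal. -/
noncomputable def mutInfo {𝒳 𝒴 : Type} [Fintype 𝒳] [Fintype 𝒴]
    (μ : 𝒳 → ℝ) (q : 𝒳 → 𝒴 → ℝ) : ℝ :=
  ∑ x, ∑ y, μ x * q x y * Real.log (q x y / (∑ x', μ x' * q x' y))

/-- Expected distortion `E_{μ⊗q}[d] = ∑_{x,y} μ(x) q(y|x) d(x,y)`. -/
noncomputable def avgDist {𝒳 𝒴 : Type} [Fintype 𝒳] [Fintype 𝒴]
    (μ : 𝒳 → ℝ) (q : 𝒳 → 𝒴 → ℝ) (d : 𝒳 → 𝒴 → ℝ) : ℝ :=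
  ∑ x, ∑ y, μ x * q x y * d x y

/-- The rate distortion function
`R(D) = inf { I(μ;q) : q a stochastic kernel, E_{μ⊗q}[d] ≤ D }`. -/
noncomputable def RD {𝒳 𝒴 : Type} [Fintype 𝒳] [Fintype 𝒴]
    (μ : 𝒳 → ℝ) (d : 𝒳 → 𝒴 → ℝ) (D : ℝ) : ℝ :=
  sInf {r | ∃ q : 𝒳 → 𝒴 → ℝ, IsKernel q ∧ avgDist μ q d ≤ D ∧ r = mutInfo μ q}

open Real

/-! For any positive weights `w` with `∑ₓ μ(x) w(x,y) ≤ 1` for every `y`, Gibbs' inequality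
`p - r ≤ p log (p / r)`, applied to `p = μ(x) q(y|x)` and `r = μ(x) ν_q(y) w(x,y)` with `ν_q` the
output marginal of `q`, gives `∑ μ q log w ≤ I(μ; q)`. The fixed-point equation `ν* = ν_{q*}` says
exactly that the tilt `w = e^{s d}/Z` is such a weight, and `log w = s d - log Z` turns the bound
into the claimed one. Equality holds for `q*`, whose ratio `q*/ν*` is `w` itself; since `s ≤ 0`,
a kernel of smaller distortion cannot have smaller mutual information. -/

theorem sub_le_mul_log_div {p r : ℝ} (hp : 0 < p) (hr : 0 < r) : p - r ≤ p * log (p / r) := by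
  have h := one_sub_inv_le_log_of_pos (div_pos hp hr)
  rw [inv_div] at h
  calc p - r = p * (1 - r / p) := by field_simp
    _ ≤ p * log (p / r) := mul_le_mul_of_nonneg_left h hp.le

theorem mul_sub_le_mul_mul_log_div_sub_log {a b c w : ℝ} (ha : 0 ≤ a) (hb : 0 ≤ b) (hw : 0 < w)
    (hc : a * b ≤ c) : a * b - a * c * w ≤ a * b * (log (b / c) - log w) := by
  rcases ha.eq_or_lt with rfl | ha
  · simp
  rcases hb.eq_or_lt with rfl | hb
  · have hc : 0 ≤ c := by simpa using hc
    simpa using mul_nonneg (mul_nonneg ha.le hc) hw.le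
  have hc : 0 < c := (mul_pos ha hb).trans_le hc
  have key := sub_le_mul_log_div hb (mul_pos hc hw)
  rw [log_div hb.ne' (mul_pos hc hw).ne', log_mul hc.ne' hw.ne'] at key
  rw [log_div hb.ne' hc.ne']
  linear_combination a * key

section MutualInformation

variable {𝒳 𝒴 : Type} [Fintype 𝒳] {μ : 𝒳 → ℝ} {q : 𝒳 → 𝒴 → ℝ}

theorem sum_mul_log_le_mutInfo [Fintype 𝒴] {w : 𝒳 → 𝒴 → ℝ} (hμ : ∀ x, 0 ≤ μ x)
    (hq : ∀ x y, 0 ≤ q x y) (hw : ∀ x y, 0 < w x y) (hw1 : ∀ y, ∑ x, μ x * w x y ≤ 1) :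
    ∑ x, ∑ y, μ x * q x y * log (w x y) ≤ mutInfo μ q := by
  set m : 𝒴 → ℝ := fun y => ∑ x, μ x * q x y
  have hm : ∀ y, 0 ≤ m y := fun y => sum_nonneg fun x _ => mul_nonneg (hμ x) (hq x y)
  have hgibbs : ∀ x y, μ x * q x y - μ x * m y * w x y
      ≤ μ x * q x y * (log (q x y / m y) - log (w x y)) := fun x y =>
    mul_sub_le_mul_mul_log_div_sub_log (hμ x) (hq x y) (hw x y)
      (single_le_sum (f := fun x' => μ x' * q x' y) (fun x' _ => mul_nonneg (hμ x') (hq x' y))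
        (mem_univ x))
  have hmass : ∑ x, ∑ y, μ x * m y * w x y ≤ ∑ x, ∑ y, μ x * q x y := calc
    ∑ x, ∑ y, μ x * m y * w x y = ∑ y, m y * ∑ x, μ x * w x y := by
      rw [sum_comm]
      simp_rw [mul_sum]
      exact sum_congr rfl fun y _ => sum_congr rfl fun x _ => by ring
    _ ≤ ∑ y, m y := sum_le_sum fun y _ => mul_le_of_le_one_right (hm y) (hw1 y)
    _ = ∑ x, ∑ y, μ x * q x y := sum_comm
  have hsum := sum_le_sum fun x (_ : x ∈ univ) => sum_le_sum fun y (_ : y ∈ univ) => hgibbs x y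
  simp only [mul_sub, sum_sub_distrib] at hsum
  unfold mutInfo
  linarith

theorem mutInfo_eq_sum_mul_log_of_outputMarginal_eq [Fintype 𝒴] {ν : 𝒴 → ℝ} {w : 𝒳 → 𝒴 → ℝ}
    (hν : ∀ y, ν y ≠ 0) (hqw : ∀ x y, q x y = ν y * w x y) (hmarg : ∀ y, ν y = ∑ x, μ x * q x y) :
    mutInfo μ q = ∑ x, ∑ y, μ x * q x y * log (w x y) := by
  unfold mutInfo
  refine sum_congr rfl fun x _ => sum_congr rfl fun y _ => ?_
  rw [← hmarg, hqw, mul_div_cancel_left₀ _ (hν y)]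

theorem sum_mul_eq_one_of_outputMarginal_eq {ν : 𝒴 → ℝ} {w : 𝒳 → 𝒴 → ℝ}
    (hν : ∀ y, ν y ≠ 0) (hqw : ∀ x y, q x y = ν y * w x y) (hmarg : ∀ y, ν y = ∑ x, μ x * q x y)
    (y : 𝒴) : ∑ x, μ x * w x y = 1 := by
  have h := hmarg y
  simp_rw [hqw, mul_left_comm _ (ν y), ← mul_sum] at h
  exact (mul_eq_left₀ (hν y)).1 h.symm

theorem RD_avgDist_eq_mutInfo [Fintype 𝒴] {d qstar : 𝒳 → 𝒴 → ℝ} (hqstar : IsKernel qstar)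
    (hmin : ∀ q, IsKernel q → avgDist μ q d ≤ avgDist μ qstar d → mutInfo μ qstar ≤ mutInfo μ q) :
    RD μ d (avgDist μ qstar d) = mutInfo μ qstar :=
  IsLeast.csInf_eq
    ⟨⟨qstar, hqstar, le_rfl, rfl⟩, by rintro r ⟨q, hq, hle, rfl⟩; exact hmin q hq hle⟩

end MutualInformation

section TiltedKernel

variable {𝒳 𝒴 : Type} [Fintype 𝒴] {s : ℝ} {d : 𝒳 → 𝒴 → ℝ} {ν : 𝒴 → ℝ} {Z : 𝒳 → ℝ}

theorem sum_mul_log_exp_div [Fintype 𝒳] {μ : 𝒳 → ℝ} {q : 𝒳 → 𝒴 → ℝ} (hZ : ∀ x, 0 < Z x)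
    (hq : ∀ x, ∑ y, q x y = 1) :
    ∑ x, ∑ y, μ x * q x y * log (exp (s * d x y) / Z x)
      = s * avgDist μ q d - ∑ x, μ x * log (Z x) := by
  simp_rw [log_div (exp_pos _).ne' (hZ _).ne', log_exp]
  rw [avgDist, mul_sum, ← sum_sub_distrib]
  refine sum_congr rfl fun x _ => ?_
  have hlogZ : ∑ y, μ x * q x y * log (Z x) = μ x * log (Z x) := by
    rw [← sum_mul, ← mul_sum, hq, mul_one]
  rw [mul_sum, ← hlogZ, ← sum_sub_distrib]
  exact sum_congr rfl fun y _ => by ring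

theorem isKernel_tilted {qstar : 𝒳 → 𝒴 → ℝ} (hν : ∀ y, 0 < ν y)
    (hZ : ∀ x, Z x = ∑ y, exp (s * d x y) * ν y) (hZpos : ∀ x, 0 < Z x)
    (hqstar : ∀ x y, qstar x y = exp (s * d x y) * ν y / Z x) : IsKernel qstar := by
  simp_rw [funext₂ hqstar]
  exact ⟨fun x y => div_nonneg (mul_pos (exp_pos _) (hν y)).le (hZpos x).le,
    fun x => by rw [← sum_div, ← hZ, div_self (hZpos x).ne']⟩

end TiltedKernel

theorem tilted_kernel_optimal_general {𝒳 𝒴 : Type} [Fintype 𝒳] [Fintype 𝒴]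
    (μ : 𝒳 → ℝ) (hμ : IsPMF μ)
    (d : 𝒳 → 𝒴 → ℝ)
    (s : ℝ) (hs : s ≤ 0)
    (ν : 𝒴 → ℝ) (hν : IsPMF ν ∧ ∀ y, 0 < ν y)
    (Z : 𝒳 → ℝ) (hZ : ∀ x, Z x = ∑ y', Real.exp (s * d x y') * ν y')
    (qstar : 𝒳 → 𝒴 → ℝ) (hqstar : ∀ x y, qstar x y = Real.exp (s * d x y) * ν y / Z x)
    (hfix : ∀ y, ν y = ∑ x, μ x * qstar x y)
    (q : 𝒳 → 𝒴 → ℝ) (hq : IsKernel q) :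
    mutInfo μ q ≥ s * avgDist μ q d - ∑ x, μ x * Real.log (Z x) ∧
    (avgDist μ q d ≤ avgDist μ qstar d → mutInfo μ q ≥ mutInfo μ qstar) ∧
    RD μ d (avgDist μ qstar d) = mutInfo μ qstar := by
  obtain ⟨⟨-, hν1⟩, hνpos⟩ := hν
  have hY : (univ : Finset 𝒴).Nonempty :=
    nonempty_of_sum_ne_zero (by rw [hν1]; exact one_ne_zero)
  have hZpos : ∀ x, 0 < Z x :=
    fun x => hZ x ▸ sum_pos (fun y _ => mul_pos (exp_pos _) (hνpos y)) hY
  have hqstar_w : ∀ x y, qstar x y = ν y * (exp (s * d x y) / Z x) :=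
    fun x y => by rw [hqstar]; ring
  have hw1 := sum_mul_eq_one_of_outputMarginal_eq (fun y => (hνpos y).ne') hqstar_w hfix
  have hbound : ∀ q', IsKernel q' → s * avgDist μ q' d - ∑ x, μ x * log (Z x) ≤ mutInfo μ q' :=
    fun q' hq' => sum_mul_log_exp_div hZpos hq'.2 ▸ sum_mul_log_le_mutInfo hμ.1 hq'.1
      (fun x y => div_pos (exp_pos _) (hZpos x)) fun y => (hw1 y).le
  have hqstarK : IsKernel qstar := isKernel_tilted hνpos hZ hZpos hqstar
  have hattain : mutInfo μ qstar = s * avgDist μ qstar d - ∑ x, μ x * log (Z x) := by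
    rw [mutInfo_eq_sum_mul_log_of_outputMarginal_eq (fun y => (hνpos y).ne') hqstar_w hfix,
      sum_mul_log_exp_div hZpos hqstarK.2]
  have hmin : ∀ q', IsKernel q' → avgDist μ q' d ≤ avgDist μ qstar d →
      mutInfo μ qstar ≤ mutInfo μ q' :=
    fun q' hq' hle => by linarith [hbound q' hq', mul_le_mul_of_nonpos_left hle hs]
  exact ⟨hbound q hq, hmin q hq, RD_avgDist_eq_mutInfo hqstarK hmin⟩

/-- for the tilted kernel `q*` whose output marginal equals `ν*`,
every stochastic kernel `q` satisfies
`I(μ; q) ≥ s·E_{μ⊗q}[d] − ∑_x μ(x) log Z(x)`; consequently if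
`E_{μ⊗q}[d] ≤ E_{μ⊗q*}[d]` then `I(μ; q) ≥ I(μ; q*)`, and `q*` achieves the
rate distortion function at `D = E_{μ⊗q*}[d]`. -/
theorem tilted_kernel_optimal {𝒳 𝒴 : Type} [Fintype 𝒳] [Fintype 𝒴]
    (μ : 𝒳 → ℝ) (hμ : IsPMF μ)
    (d : 𝒳 → 𝒴 → ℝ) (hd : ∀ x y, 0 ≤ d x y)
    (s : ℝ) (hs : s ≤ 0)
    (ν : 𝒴 → ℝ) (hν : IsPMF ν ∧ ∀ y, 0 < ν y)
    (Z : 𝒳 → ℝ) (hZ : ∀ x, Z x = ∑ y', Real.exp (s * d x y') * ν y')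
    (qstar : 𝒳 → 𝒴 → ℝ) (hqstar : ∀ x y, qstar x y = Real.exp (s * d x y) * ν y / Z x)
    (hfix : ∀ y, ν y = ∑ x, μ x * qstar x y)
    (q : 𝒳 → 𝒴 → ℝ) (hq : IsKernel q) :
    mutInfo μ q ≥ s * avgDist μ q d - ∑ x, μ x * Real.log (Z x) ∧
    (avgDist μ q d ≤ avgDist μ qstar d → mutInfo μ q ≥ mutInfo μ qstar) ∧
    RD μ d (avgDist μ qstar d) = mutInfo μ qstar :=
  tilted_kernel_optimal_general μ hμ d s hs ν hν Z hZ qstar hqstar hfix q hq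
end
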